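/- Let {x_k} be a normalized complete minimal system with biorthogonal {x_k*}. The subsets σ ⊆ ℕ for which the mixed system {x_k}_{k∈σ} ∪ {x_k*}_{k∈σ^c} is complete are exactly the points of continuity of the map σ ↦ P_σ from 𝔓(ℕ) (product topology) to the projections with the strong operator topology. In particular, this map is a homeomorphism onto its image if and only if {x_k} is hereditarily complete. -/

import Mathlib

/-!
Near `a`, every `P_b` agrees with `P_a` on the mixed system: `P_b` fixes `x k` once
`b k = a k = true` and kills `y k` once `b k = a k = false`, as `y k` is orthogonal to every
`x j` with `j ≠ k`. The projections are contractions, so this local agreement passes to the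
closed span, and a complete mixed system makes `a` a point of continuity. Conversely, take
`w ≠ 0` orthogonal to the mixed system. A vector orthogonal to all but finitely many `x j` is a
combination of the corresponding `y j`, so `w` lies in the closed span of the `x k` with
`a k = true` or `k ≥ n`, for every `n`. These index sets tend to `a` and their projections fix
`w`, but `P_a w = 0`. Minimality makes `a ↦ P_a` injective (`P_a (x k) = x k` iff `a k = true`),
and a continuous injection of the compact space `ℕ → Bool` is an embedding.
-/

open Filter Topology

noncomputable section

variable {H : Type*} [NormedAddCommGroup H] [InnerProductSpace ℂ H] [CompleteSpace H]

/-- Closed linear span of a set of vectors. -/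
def clSpan (s : Set H) : Submodule ℂ H := (Submodule.span ℂ s).topologicalClosure

instance (s : Set H) : CompleteSpace (clSpan s) :=
  (Submodule.isClosed_topologicalClosure _).completeSpace_coe

/-- Orthogonal projection onto the closed linear span of `s`, as a map `H → H`. -/
def projS (s : Set H) : H →L[ℂ] H :=
  (clSpan s).subtypeL ∘L (clSpan s).orthogonalProjection

/-- The system `x` is complete: its closed linear span is all of `H`. -/
def IsCompleteSystem (x : ℕ → H) : Prop := clSpan (Set.range x) = ⊤

/-- The system `x` is minimal: no vector lies in the closed span of the others. -/
def IsMinimalSystem (x : ℕ → H) : Prop :=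
  ∀ k, x k ∉ clSpan (x '' {j | j ≠ k})

/-- `y` is biorthogonal to `x`. -/
def IsBiorthogonal (x y : ℕ → H) : Prop :=
  ∀ k j, (inner ℂ (x k) (y j) : ℂ) = if k = j then 1 else 0

omit [CompleteSpace H] in
lemma mem_clSpan_of_mem {s : Set H} {v : H} (h : v ∈ s) : v ∈ clSpan s :=
  Submodule.le_topologicalClosure _ (Submodule.subset_span h)

omit [CompleteSpace H] in
lemma clSpan_mono {s t : Set H} (h : s ⊆ t) : clSpan s ≤ clSpan t :=
  Submodule.topologicalClosure_mono (Submodule.span_mono h)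

omit [CompleteSpace H] in
lemma mem_orthogonal_clSpan_iff {s : Set H} {v : H} :
    v ∈ (clSpan s)ᗮ ↔ ∀ u ∈ s, (inner ℂ u v : ℂ) = 0 := by
  rw [clSpan, Submodule.orthogonal_closure, ← Submodule.span_singleton_le_iff_mem,
    ← Submodule.isOrtho_iff_le, Submodule.isOrtho_comm, Submodule.isOrtho_span]
  simp

lemma clSpan_eq_top_iff {s : Set H} :
    clSpan s = ⊤ ↔ ∀ v, (∀ u ∈ s, (inner ℂ u v : ℂ) = 0) → v = 0 := by
  simp_rw [← Submodule.orthogonal_eq_bot_iff, Submodule.eq_bot_iff, mem_orthogonal_clSpan_iff]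

lemma projS_apply_eq_self_iff {s : Set H} {v : H} : projS s v = v ↔ v ∈ clSpan s :=
  Submodule.starProjection_eq_self_iff

lemma projS_apply_eq_zero_iff {s : Set H} {v : H} :
    projS s v = 0 ↔ ∀ u ∈ s, (inner ℂ u v : ℂ) = 0 :=
  (Submodule.starProjection_apply_eq_zero_iff _).trans mem_orthogonal_clSpan_iff

lemma lipschitzWith_projS (s : Set H) : LipschitzWith 1 (projS s) :=
  (clSpan s).lipschitzWith_starProjection

lemma eventually_apply_eq {ι : Type*} {X : ι → Type*} [∀ i, TopologicalSpace (X i)]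
    [∀ i, DiscreteTopology (X i)] (a : ∀ i, X i) (i : ι) : ∀ᶠ b in 𝓝 a, b i = a i :=
  (continuous_apply i).continuousAt.eventually_mem ((isOpen_discrete {a i}).mem_nhds rfl)

section Systems

variable {x y : ℕ → H}

lemma projS_image_apply_of_mem {σ : Set ℕ} {k : ℕ} (hk : k ∈ σ) :
    projS (x '' σ) (x k) = x k :=
  projS_apply_eq_self_iff.2 (mem_clSpan_of_mem (Set.mem_image_of_mem x hk))

omit [CompleteSpace H] in
lemma IsBiorthogonal.inner_eq_zero (hbi : IsBiorthogonal x y) {j k : ℕ} (h : j ≠ k) :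
    (inner ℂ (x j) (y k) : ℂ) = 0 := by
  rw [hbi, if_neg h]

lemma IsBiorthogonal.projS_apply_eq_zero (hbi : IsBiorthogonal x y) {σ : Set ℕ} {k : ℕ}
    (hk : k ∉ σ) : projS (x '' σ) (y k) = 0 :=
  projS_apply_eq_zero_iff.2 <| by
    rintro _ ⟨j, hj, rfl⟩
    exact hbi.inner_eq_zero (ne_of_mem_of_not_mem hj hk)

lemma IsBiorthogonal.eq_sum_of_inner_eq_zero (hc : IsCompleteSystem x) (hbi : IsBiorthogonal x y)
    (F : Finset ℕ) {u : H} (hu : ∀ j ∉ F, (inner ℂ (x j) u : ℂ) = 0) :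
    u = ∑ k ∈ F, (inner ℂ (x k) u : ℂ) • y k := by
  rw [← sub_eq_zero]
  refine clSpan_eq_top_iff.1 hc _ ?_
  rintro _ ⟨j, rfl⟩
  simp only [inner_sub_right, inner_sum, inner_smul_right, hbi j, mul_ite, mul_one, mul_zero,
    Finset.sum_ite_eq]
  split_ifs with hj
  · exact sub_self _
  · rw [hu j hj, sub_zero]

lemma IsBiorthogonal.eventually_projS_apply_eq (hbi : IsBiorthogonal x y) {a : ℕ → Bool} {v : H}
    (hv : v ∈ Submodule.span ℂ (x '' {k | a k = true} ∪ y '' {k | a k = true}ᶜ)) :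
    ∀ᶠ b in 𝓝 a, projS (x '' {k | b k = true}) v = projS (x '' {k | a k = true}) v := by
  induction hv using Submodule.span_induction with
  | mem _ hv =>
    rcases hv with ⟨k, hk, rfl⟩ | ⟨k, hk, rfl⟩
    · filter_upwards [eventually_apply_eq a k] with b hb
      rw [projS_image_apply_of_mem hk, projS_image_apply_of_mem (hb.trans hk)]
    · filter_upwards [eventually_apply_eq a k] with b hb
      rw [hbi.projS_apply_eq_zero hk, hbi.projS_apply_eq_zero (by simpa [hb] using hk)]
  | zero => simp
  | add _ _ _ _ h₁ h₂ =>
    filter_upwards [h₁, h₂] with b hb₁ hb₂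
    rw [map_add, map_add, hb₁, hb₂]
  | smul c _ _ h =>
    filter_upwards [h] with b hb
    rw [map_smul, map_smul, hb]

lemma IsBiorthogonal.continuousAt_projS (hbi : IsBiorthogonal x y) {a : ℕ → Bool}
    (htop : clSpan (x '' {k | a k = true} ∪ y '' {k | a k = true}ᶜ) = ⊤) :
    ContinuousAt (fun b : ℕ → Bool => ⇑(projS (x '' {k | b k = true}))) a := by
  have hclosed : IsClosed {v | Tendsto (fun b : ℕ → Bool => projS (x '' {k | b k = true}) v)
      (𝓝 a) (𝓝 (projS (x '' {k | a k = true}) v))} :=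
    Equicontinuous.isClosed_setOfPred_tendsto
      (LipschitzWith.uniformEquicontinuous _ 1 fun _ => lipschitzWith_projS _).equicontinuous
      (projS _).continuous
  have hspan : (Submodule.span ℂ (x '' {k | a k = true} ∪ y '' {k | a k = true}ᶜ) : Set H) ⊆
      {v | Tendsto (fun b : ℕ → Bool => projS (x '' {k | b k = true}) v)
        (𝓝 a) (𝓝 (projS (x '' {k | a k = true}) v))} := fun v hv =>
    tendsto_const_nhds.congr' (EventuallyEq.symm (hbi.eventually_projS_apply_eq hv))
  rw [continuousAt_pi]
  intro v
  refine hclosed.closure_subset_iff.2 hspan ?_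
  rw [← Submodule.topologicalClosure_coe, ← clSpan, htop]
  trivial

lemma tendsto_or_decide_le (a : ℕ → Bool) :
    Tendsto (fun n k => a k || decide (n ≤ k)) atTop (𝓝 a) :=
  tendsto_pi_nhds.2 fun k => tendsto_const_nhds.congr' <| by
    filter_upwards [eventually_gt_atTop k] with n hn
    simp [Nat.not_le.2 hn]

lemma IsBiorthogonal.mem_clSpan_union_Ici (hc : IsCompleteSystem x) (hbi : IsBiorthogonal x y)
    {σ : Set ℕ} {w : H} (hw : ∀ k ∉ σ, (inner ℂ (y k) w : ℂ) = 0) (n : ℕ) :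
    w ∈ clSpan (x '' (σ ∪ Set.Ici n)) := by
  classical
  rw [← (clSpan _).orthogonal_orthogonal, Submodule.mem_orthogonal]
  intro u hu
  rw [mem_orthogonal_clSpan_iff, Set.forall_mem_image] at hu
  have hu_eq := hbi.eq_sum_of_inner_eq_zero hc ((Finset.range n).filter (· ∉ σ)) fun j hj =>
    hu <| by
      by_contra h
      simp_all
  rw [hu_eq, sum_inner]
  refine Finset.sum_eq_zero fun k hk => ?_
  rw [inner_smul_left, hw k (Finset.mem_filter.1 hk).2, mul_zero]

lemma IsBiorthogonal.clSpan_eq_top_of_continuousAt (hc : IsCompleteSystem x)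
    (hbi : IsBiorthogonal x y) {a : ℕ → Bool}
    (hcont : ContinuousAt (fun b : ℕ → Bool => ⇑(projS (x '' {k | b k = true}))) a) :
    clSpan (x '' {k | a k = true} ∪ y '' {k | a k = true}ᶜ) = ⊤ := by
  refine clSpan_eq_top_iff.2 fun w hw => ?_
  simp only [Set.mem_union, or_imp, forall_and, Set.forall_mem_image] at hw
  have hfix : ∀ n, projS (x '' {k | (a k || decide (n ≤ k)) = true}) w = w := fun n => by
    have hset : {k | (a k || decide (n ≤ k)) = true} = {k | a k = true} ∪ Set.Ici n := by
      ext k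
      simp
    rw [hset, projS_apply_eq_self_iff]
    exact hbi.mem_clSpan_union_Ici hc hw.2 n
  have hzero : projS (x '' {k | a k = true}) w = 0 :=
    projS_apply_eq_zero_iff.2 (Set.forall_mem_image.2 hw.1)
  have hlim := ((continuous_apply w).tendsto _).comp (hcont.tendsto.comp (tendsto_or_decide_le a))
  simp only [Function.comp_def, hfix, hzero] at hlim
  exact tendsto_nhds_unique tendsto_const_nhds hlim

lemma IsMinimalSystem.projS_image_apply_eq_self_iff (hmin : IsMinimalSystem x) {σ : Set ℕ}
    {k : ℕ} : projS (x '' σ) (x k) = x k ↔ k ∈ σ := by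
  refine ⟨fun h => ?_, projS_image_apply_of_mem⟩
  by_contra hk
  exact hmin k (clSpan_mono (Set.image_mono fun j hj => ne_of_mem_of_not_mem hj hk)
    (projS_apply_eq_self_iff.1 h))

lemma IsMinimalSystem.injective_projS (hmin : IsMinimalSystem x) :
    Function.Injective (fun b : ℕ → Bool => ⇑(projS (x '' {k | b k = true}))) := by
  intro b b' h
  funext k
  rw [Bool.eq_iff_iff]
  change k ∈ {j | b j = true} ↔ k ∈ {j | b' j = true}
  rw [← hmin.projS_image_apply_eq_self_iff, ← hmin.projS_image_apply_eq_self_iff]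
  exact iff_of_eq (congrArg (· = x k) (congrFun h (x k)))

end Systems

theorem continuity_points_and_embedding_general
    (x y : ℕ → H) (hc : IsCompleteSystem x) (hmin : IsMinimalSystem x)
    (hbi : IsBiorthogonal x y) :
    (∀ a : ℕ → Bool,
        clSpan (x '' {k | a k = true} ∪ y '' {k | a k = true}ᶜ) = ⊤ ↔
          ContinuousAt (fun b : ℕ → Bool => fun v : H => projS (x '' {k | b k = true}) v) a) ∧
    ((∀ N : Set ℕ, clSpan (x '' N ∪ y '' Nᶜ) = ⊤) ↔
      IsEmbedding (fun b : ℕ → Bool => fun v : H => projS (x '' {k | b k = true}) v)) := by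
  have hpoint : ∀ a : ℕ → Bool, clSpan (x '' {k | a k = true} ∪ y '' {k | a k = true}ᶜ) = ⊤ ↔
      ContinuousAt (fun b : ℕ → Bool => ⇑(projS (x '' {k | b k = true}))) a :=
    fun a => ⟨hbi.continuousAt_projS, hbi.clSpan_eq_top_of_continuousAt hc⟩
  refine ⟨hpoint, fun hall => ?_, fun hemb N => ?_⟩
  · have hcont := continuous_iff_continuousAt.2 fun a => (hpoint a).1 (hall _)
    exact (hcont.isClosedEmbedding hmin.injective_projS).isEmbedding
  · classical
    simpa using (hpoint fun k => decide (k ∈ N)).2 hemb.continuous.continuousAt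

/-- Identifying `𝔓(ℕ)` with `ℕ → Bool` (product topology) and giving the projections the
strong operator topology (the topology induced from `H → H` with the product topology):
the subsets `σ` with complete mixed system are exactly the points of continuity of
`φ : σ ↦ P_σ`; and `φ` is a homeomorphism onto its image (an embedding) iff the system is
hereditarily complete. -/
theorem continuity_points_and_embedding [TopologicalSpace.SeparableSpace H]
    (x y : ℕ → H) (hc : IsCompleteSystem x) (hmin : IsMinimalSystem x)
    (hbi : IsBiorthogonal x y) (hnorm : ∀ k, ‖x k‖ = 1) :
    (∀ a : ℕ → Bool,
        clSpan (x '' {k | a k = true} ∪ y '' {k | a k = true}ᶜ) = ⊤ ↔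
          ContinuousAt (fun b : ℕ → Bool => fun v : H => projS (x '' {k | b k = true}) v) a) ∧
    ((∀ N : Set ℕ, clSpan (x '' N ∪ y '' Nᶜ) = ⊤) ↔
      IsEmbedding (fun b : ℕ → Bool => fun v : H => projS (x '' {k | b k = true}) v)) :=
  continuity_points_and_embedding_general x y hc hmin hbi
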